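/- arXiv:2403.05611 — 8 statements merged into one kernel-verified Lean document; each statement's English description precedes it below -/
import Mathlib

section
/- Let G be a k-vertex-critical graph. Then there do not exist two nonempty disjoint vertex subsets X and Y of G such that: X and Y are anticomplete to each other (no edges between them), χ(G[X]) ≤ χ(G[Y]), and Y is complete to N(X) (every vertex of Y is adjacent to every vertex of N(X)). -/
open SimpleGraph

/-- `G` contains no induced subgraph isomorphic to `H`. -/
def HFree {W V : Type*} (H : SimpleGraph W) (G : SimpleGraph V) : Prop :=
  IsEmpty (H ↪g G)

/-- `G` is `k`-vertex-critical: `χ(G) = k` and deleting any vertex decreases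
the chromatic number below `k`. -/
def IsKVertexCritical {V : Type*} (G : SimpleGraph V) (k : ℕ) : Prop :=
  G.chromaticNumber = k ∧ ∀ v : V, (G.induce {v}ᶜ).chromaticNumber < k

/-- The star `K_{1,s}`: center `0`, leaves `1, …, s`. -/
def starGraph (s : ℕ) : SimpleGraph (Fin (s + 1)) :=
  SimpleGraph.fromRel (fun i _ => (i : ℕ) = 0)

/-- `K_{1,s} + P_1`: the disjoint union of the star `K_{1,s}`
(center `0`, leaves `1, …, s`) and the isolated vertex `s + 1`. -/
def starPlusP1 (s : ℕ) : SimpleGraph (Fin (s + 2)) :=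
  SimpleGraph.fromRel (fun i j => (i : ℕ) = 0 ∧ (j : ℕ) ≠ 0 ∧ (j : ℕ) ≤ s)

/-- The complement of `K_3 + 2P_1`: vertices `0,1,2` pairwise nonadjacent,
vertices `3,4` adjacent to everything else. -/
def coK3Plus2P1 : SimpleGraph (Fin 5) :=
  SimpleGraph.fromRel (fun i j => 3 ≤ (i : ℕ) ∨ 3 ≤ (j : ℕ))

theorem stmt1 {V : Type*} (G : SimpleGraph V) (k : ℕ) (h : IsKVertexCritical G k) :
    ¬ ∃ X Y : Set V, X.Nonempty ∧ Y.Nonempty ∧ Disjoint X Y ∧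
      (∀ x ∈ X, ∀ y ∈ Y, ¬ G.Adj x y) ∧
      (G.induce X).chromaticNumber ≤ (G.induce Y).chromaticNumber ∧
      (∀ y ∈ Y, ∀ z ∈ (⋃ x ∈ X, G.neighborSet x) \ X, G.Adj y z) := by
  classical
  rintro ⟨X, Y, ⟨v, hvX⟩, hY, hdisj, hanti, hchrom, hcompl⟩
  obtain ⟨hχ, hcrit⟩ := h
  obtain ⟨k, rfl⟩ : ∃ k', k = k' + 1 := by
    cases k with
    | zero => exact absurd (hcrit v) (by simp)
    | succ k => exact ⟨k, rfl⟩
  have hlt := hcrit v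
  have hle : (G.induce {v}ᶜ).chromaticNumber ≤ (k : ℕ∞) := by
    have h1 : (G.induce {v}ᶜ).chromaticNumber < (k : ℕ∞) + 1 := by exact_mod_cast hlt
    exact Order.le_of_lt_succ (by rw [Order.succ_eq_add_one]; exact h1)
  rw [chromaticNumber_le_iff_colorable] at hle
  obtain ⟨c⟩ := hle
  -- every vertex of Y and of N(X)\X is ≠ v
  have hvne : ∀ w : V, w ∉ X → w ∈ ({v}ᶜ : Set V) := by
    intro w hw
    simp only [Set.mem_compl_iff, Set.mem_singleton_iff]
    rintro rfl; exact hw hvX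
  have hYne : ∀ y ∈ Y, y ∈ ({v}ᶜ : Set V) := fun y hy =>
    hvne y (fun hx => hdisj.ne_of_mem hx hy rfl (a := y) (b := y))
  -- colors used on Y
  set S : Set (Fin k) := {a | ∃ y : V, ∃ hy : y ∈ Y, c ⟨y, hYne y hy⟩ = a} with hS
  haveI : Fintype S := Fintype.ofFinite _
  -- coloring of induce Y into S
  have cY : (G.induce Y).Coloring S :=
    SimpleGraph.Coloring.mk
      (fun y => ⟨c ⟨y.1, hYne y.1 y.2⟩, ⟨y.1, y.2, rfl⟩⟩)
      (by
        rintro ⟨a, ha⟩ ⟨b, hb⟩ hab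
        simp only [comap_adj, Function.Embedding.coe_subtype] at hab
        intro hc
        exact c.valid (by exact hab) (Subtype.ext_iff.mp hc))
  have hYcard : (G.induce Y).chromaticNumber ≤ (Fintype.card S : ℕ∞) :=
    cY.colorable.chromaticNumber_le
  have hXcol : (G.induce X).Colorable (Fintype.card S) := by
    rw [← chromaticNumber_le_iff_colorable]
    exact hchrom.trans hYcard
  obtain ⟨cX0⟩ := hXcol
  let e : Fin (Fintype.card S) ≃ S := (Fintype.equivFin S).symm
  let cX : ∀ x : X, S := fun x => e (cX0 x)
  have cXvalid : ∀ {a b : X}, (G.induce X).Adj a b → cX a ≠ cX b := by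
    intro a b hab hc
    exact cX0.valid hab (e.injective hc)
  -- full coloring
  let f : V → Fin k := fun w =>
    if hw : w ∈ X then (cX ⟨w, hw⟩ : Fin k)
    else c ⟨w, hvne w hw⟩
  have hf : ∀ {a b : V}, G.Adj a b → f a ≠ f b := by
    have key : ∀ (a b : V), G.Adj a b → ∀ (haX : a ∈ X) (hbX : b ∉ X),
        (cX ⟨a, haX⟩ : Fin k) ≠ c ⟨b, hvne b hbX⟩ := by
      intro a b hab haX hbX
      obtain ⟨y, hy, hcy⟩ := (cX ⟨a, haX⟩).2
      rw [← hcy]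
      have hbN : b ∈ (⋃ x ∈ X, G.neighborSet x) \ X :=
        ⟨Set.mem_biUnion haX hab, hbX⟩
      have hyb : G.Adj y b := hcompl y hy b hbN
      intro hc
      exact c.valid (by exact hyb) hc
    intro a b hab
    by_cases haX : a ∈ X <;> by_cases hbX : b ∈ X <;>
      simp only [f, dif_pos, dif_neg, haX, hbX, dite_true, dite_false]
    · intro hc
      exact cXvalid (a := ⟨a, haX⟩) (b := ⟨b, hbX⟩) (by exact hab) (Subtype.ext hc)
    · exact key a b hab haX hbX
    · exact fun hc => key b a hab.symm hbX haX hc.symm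
    · intro hc
      exact c.valid (by exact hab) hc
  have : G.Colorable k := ⟨SimpleGraph.Coloring.mk f hf⟩
  have : G.chromaticNumber ≤ (k : ℕ∞) := chromaticNumber_le_iff_colorable.mpr this
  rw [hχ] at this
  exact absurd this (by exact_mod_cast Nat.not_succ_le_self k)
end

section
/- Let G be a k-vertex-critical graph and let S be a homogeneous set of G. Then for each connected component A of G[S], if χ(A) = m with m < k, then A is an m-vertex-critical graph. -/
/-!
A component `A` of `G[S]` is itself homogeneous in `G`. Suppose `χ(A - v) ≥ χ(A)` and colour
`G - v` with `n < χ(G)` colours. The colours used on `A - v` are at least `χ(A)` many, and every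
vertex outside `A` with a neighbour in `A` sees all of `A`, hence avoids all of them. Recolouring
`A` with `χ(A)` of these colours therefore extends to an `n`-colouring of `G`, a contradiction.
-/

open SimpleGraph

namespace SimpleGraph

variable {V α : Type*} {G : SimpleGraph V}

def IsHomogeneousSet (G : SimpleGraph V) (S : Set V) : Prop :=
  ∀ v ∉ S, (∀ s ∈ S, G.Adj v s) ∨ (∀ s ∈ S, ¬ G.Adj v s)

theorem IsHomogeneousSet.of_subset_of_not_adj {S A : Set V} (hS : G.IsHomogeneousSet S)
    (hAS : A ⊆ S) (hanti : ∀ a ∈ A, ∀ s ∈ S \ A, ¬ G.Adj a s) :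
    G.IsHomogeneousSet A := by
  intro v hv
  by_cases hvS : v ∈ S
  · exact .inr fun a ha hva => hanti a ha v ⟨hvS, hv⟩ hva.symm
  · exact (hS v hvS).imp (fun h a ha => h a (hAS ha)) (fun h a ha => h a (hAS ha))

theorem IsHomogeneousSet.adj_of_adj {A : Set V} (hA : G.IsHomogeneousSet A) {a b y : V}
    (ha : a ∈ A) (hb : b ∈ A) (hy : y ∉ A) (hay : G.Adj a y) : G.Adj b y :=
  (((hA y hy).resolve_right fun h => h a ha hay.symm) b hb).symm

theorem colorable_natCard_iff_exists_coloring {H : SimpleGraph V} {C : Set α} [Finite C] :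
    H.Colorable (Nat.card C) ↔ ∃ d : H.Coloring α, ∀ x, d x ∈ C := by
  constructor
  · rintro ⟨d⟩
    exact ⟨H.recolorOfEmbedding ((Finite.equivFin C).symm.toEmbedding.trans
      (Function.Embedding.subtype _)) d, fun x => ((Finite.equivFin C).symm (d x)).2⟩
  · rintro ⟨d, hd⟩
    exact ⟨H.recolorOfEquiv (Finite.equivFin C)
      (Coloring.mk (fun x => ⟨d x, hd x⟩) fun hxy h => d.valid hxy (congrArg Subtype.val h))⟩

def Coloring.piecewise (A : Set V) [DecidablePred (· ∈ A)] (d : (G.induce A).Coloring α)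
    (c : (G.induce Aᶜ).Coloring α) (h : ∀ (a : A) (y : ↥Aᶜ), G.Adj a y → d a ≠ c y) :
    G.Coloring α :=
  Coloring.mk (fun x => if hx : x ∈ A then d ⟨x, hx⟩ else c ⟨x, hx⟩) fun {x y} hxy => by
    by_cases hx : x ∈ A <;> by_cases hy : y ∈ A <;> simp only [hx, hy, dite_true, dite_false]
    · exact d.valid hxy
    · exact h ⟨x, hx⟩ ⟨y, hy⟩ hxy
    · exact (h ⟨y, hy⟩ ⟨x, hx⟩ hxy.symm).symm
    · exact c.valid hxy

theorem IsHomogeneousSet.colorable_of_chromaticNumber_induce_le {A : Set V}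
    (hA : G.IsHomogeneousSet A) {v : V} (hv : v ∈ A)
    (hχ : (G.induce A).chromaticNumber ≤ ((G.induce A).induce {⟨v, hv⟩}ᶜ).chromaticNumber)
    {n : ℕ} (hn : (G.induce {v}ᶜ).Colorable n) : G.Colorable n := by
  classical
  obtain ⟨c⟩ := hn
  let C : Set (Fin n) := c '' {w | ↑w ∈ A}
  let restrict : (G.induce A).induce {⟨v, hv⟩}ᶜ →g G.induce {v}ᶜ :=
    induceHom (Embedding.induce A).toHom fun x hx h => hx (Subtype.ext h)
  have hAv : ((G.induce A).induce {⟨v, hv⟩}ᶜ).Colorable (Nat.card C) :=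
    colorable_natCard_iff_exists_coloring.2 ⟨c.comp restrict, fun x => ⟨_, x.1.2, rfl⟩⟩
  obtain ⟨d, hdC⟩ := colorable_natCard_iff_exists_coloring.1
    (chromaticNumber_le_iff_colorable.1 (hχ.trans hAv.chromaticNumber_le))
  have hAc : Set.MapsTo id Aᶜ {v}ᶜ := Set.compl_subset_compl.2 (Set.singleton_subset_iff.2 hv)
  refine ⟨Coloring.piecewise A d (c.comp (induceHom Hom.id hAc)) fun a y hay => ?_⟩
  obtain ⟨w, hwA, hw⟩ := hdC a
  rw [← hw]
  exact c.valid (hA.adj_of_adj a.2 hwA y.2 hay)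

theorem IsHomogeneousSet.chromaticNumber_induce_compl_lt {A : Set V}
    (hA : G.IsHomogeneousSet A) {v : V} (hv : v ∈ A)
    (hG : (G.induce {v}ᶜ).chromaticNumber < G.chromaticNumber) :
    ((G.induce A).induce {⟨v, hv⟩}ᶜ).chromaticNumber < (G.induce A).chromaticNumber := by
  contrapose! hG
  exact chromaticNumber_le_of_forall_imp fun _ => hA.colorable_of_chromaticNumber_induce_le hv hG

end SimpleGraph

theorem stmt2_general {V : Type*} (G : SimpleGraph V) (k : ℕ) (h : IsKVertexCritical G k)
    (S : Set V) (hhom : ∀ v ∉ S, (∀ s ∈ S, G.Adj v s) ∨ (∀ s ∈ S, ¬ G.Adj v s))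
    (A : Set V) (hAS : A ⊆ S)
    (hcomp : ∀ a ∈ A, ∀ s ∈ S \ A, ¬ G.Adj a s)
    (m : ℕ) (hm : (G.induce A).chromaticNumber = m) :
    IsKVertexCritical (G.induce A) m := by
  have hA : G.IsHomogeneousSet A := IsHomogeneousSet.of_subset_of_not_adj hhom hAS hcomp
  refine ⟨hm, fun ⟨v, hv⟩ => hm ▸ hA.chromaticNumber_induce_compl_lt hv ?_⟩
  exact (h.2 v).trans_eq h.1.symm

theorem stmt2 {V : Type*} (G : SimpleGraph V) (k : ℕ) (h : IsKVertexCritical G k)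
    (S : Set V) (hhom : ∀ v ∉ S, (∀ s ∈ S, G.Adj v s) ∨ (∀ s ∈ S, ¬ G.Adj v s))
    (A : Set V) (hAS : A ⊆ S) (hne : A.Nonempty) (hconn : (G.induce A).Connected)
    (hcomp : ∀ a ∈ A, ∀ s ∈ S \ A, ¬ G.Adj a s)
    (m : ℕ) (hm : (G.induce A).chromaticNumber = m) (hmk : m < k) :
    IsKVertexCritical (G.induce A) m :=
  stmt2_general G k h S hhom A hAS hcomp m hm
end

section
/- Let G be a (P_m, complement of (K_3+2P_1))-free graph and let c,d be fixed integers. Let S,T be two disjoint vertex subsets with |S| ≤ c, χ(G[T]) ≤ d, and G[T ∪ S] connected. Suppose every vertex in S is nonadjacent to at least one of any pair of nonadjacent vertices x_1, x_2 ∈ T, and there exists a vertex w ∈ V(G)\(S∪T) complete to S ∪ T. Then |T| is bounded by a function of m, c, and d only. -/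
open SimpleGraph

/-!
Every vertex `a` of `T ∪ S` is adjacent, together with `w`, to all of its neighbours in `T`;
since `G` has no induced `co-(K₃ + 2P₁)`, these neighbours contain no independent triple, so each
of the `d` colour classes of `G[T]` meets them in at most two vertices. Hence `G[T ∪ S]` has
maximum degree at most `2d + c`. As `G` is `P_m`-free, a shortest path of `G[T ∪ S]`, which is an
induced path, has fewer than `m` vertices, so the connected graph `G[T ∪ S]` has radius less than
`m` and at most `(2d + c + 1)^m` vertices.
-/

open Finset

theorem HFree.induce {W V : Type*} {H : SimpleGraph W} {G : SimpleGraph V} (hG : HFree H G)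
    (s : Set V) : HFree H (G.induce s) :=
  ⟨fun e => hG.false ((Embedding.induce s).comp e)⟩

namespace SimpleGraph

variable {V : Type*} {G : SimpleGraph V}

theorem Walk.dist_getVert_getVert_of_length_eq_dist {u v : V} (p : G.Walk u v)
    (hp : p.length = G.dist u v) {i j : ℕ} (hij : i ≤ j) (hj : j ≤ p.length) :
    G.dist (p.getVert i) (p.getVert j) = j - i := by
  have hsub : ((p.take j).drop i).IsSubwalk p :=
    (isSubwalk_drop _ i).trans (p.isSubwalk_take j)
  have := length_eq_dist_of_subwalk hp hsub
  simp only [drop_length, take_length, take_getVert, min_eq_right hij, min_eq_left hj] at this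
  exact this.symm

theorem Walk.adj_getVert_iff_of_length_eq_dist {u v : V} (p : G.Walk u v)
    (hp : p.length = G.dist u v) {i j : ℕ} (hi : i ≤ p.length) (hj : j ≤ p.length) :
    G.Adj (p.getVert i) (p.getVert j) ↔ i + 1 = j ∨ j + 1 = i := by
  rw [← dist_eq_one_iff_adj]
  rcases le_total i j with hij | hji
  · rw [p.dist_getVert_getVert_of_length_eq_dist hp hij hj]; omega
  · rw [dist_comm, p.dist_getVert_getVert_of_length_eq_dist hp hji hi]; omega

theorem Reachable.nonempty_pathGraph_embedding {u v : V} (h : G.Reachable u v) {m : ℕ}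
    (hm : m ≤ G.dist u v + 1) : Nonempty (pathGraph m ↪g G) := by
  obtain ⟨p, hp⟩ := h.exists_walk_length_eq_dist
  have hlt (i : Fin m) : (i : ℕ) ≤ p.length := by omega
  have hadj (i j : Fin m) : G.Adj (p.getVert i) (p.getVert j) ↔ (pathGraph m).Adj i j := by
    rw [pathGraph_adj, p.adj_getVert_iff_of_length_eq_dist hp (hlt i) (hlt j)]
  refine ⟨⟨⟨fun i => p.getVert i, fun i j hij => ?_⟩, hadj _ _⟩⟩
  have := p.dist_getVert_getVert_of_length_eq_dist hp (Nat.zero_le i) (hlt i)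
  have := p.dist_getVert_getVert_of_length_eq_dist hp (Nat.zero_le j) (hlt j)
  simp_all [Fin.ext_iff]

theorem Reachable.dist_add_one_lt_of_hFree_pathGraph {u v : V} (h : G.Reachable u v) {m : ℕ}
    (hG : HFree (pathGraph m) G) : G.dist u v + 1 < m := by
  by_contra! hm
  exact hG.false (h.nonempty_pathGraph_embedding hm).some

theorem Reachable.exists_adj_dist_eq {u v : V} (h : G.Reachable u v) {k : ℕ}
    (hk : G.dist u v = k + 1) : ∃ a, G.Adj a v ∧ G.dist u a = k := by
  obtain ⟨p, hp⟩ := h.exists_walk_length_eq_dist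
  refine ⟨p.getVert k, ?_, ?_⟩
  · have := p.adj_getVert_succ (i := k) (by omega)
    rwa [← hk, ← hp, p.getVert_length] at this
  · simpa using p.dist_getVert_getVert_of_length_eq_dist hp (Nat.zero_le k) (by omega)

theorem Connected.card_le_pow_of_degree_le_of_dist_le [Fintype V] [DecidableRel G.Adj]
    (hG : G.Connected) {Δ r : ℕ} (hdeg : ∀ v, G.degree v ≤ Δ) (u : V) (hr : ∀ v, G.dist u v ≤ r) :
    Fintype.card V ≤ (Δ + 1) ^ r := by
  classical
  have hball (k : ℕ) : #{v | G.dist u v ≤ k} ≤ (Δ + 1) ^ k := by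
    induction k with
    | zero => simp [hG.dist_eq_zero_iff, filter_eq]
    | succ k ih =>
      have hsub : ({v | G.dist u v ≤ k + 1} : Finset V) ⊆
          ({v | G.dist u v ≤ k} : Finset V).biUnion fun a => insert a (G.neighborFinset a) := by
        intro v hv
        simp only [mem_filter, mem_univ, true_and, mem_biUnion, mem_insert, mem_neighborFinset]
          at hv ⊢
        rcases Nat.lt_or_eq_of_le hv with hlt | heq
        · exact ⟨v, by omega, .inl rfl⟩
        · obtain ⟨a, hav, ha⟩ := (hG u v).exists_adj_dist_eq heq
          exact ⟨a, ha.le, .inr hav⟩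
      calc _ ≤ _ := card_le_card hsub
        _ ≤ #{v | G.dist u v ≤ k} * (Δ + 1) := card_biUnion_le_card_mul _ _ _ fun a _ =>
            (card_insert_le _ _).trans (by simpa using hdeg a)
        _ ≤ (Δ + 1) ^ (k + 1) := by rw [pow_succ]; gcongr
  simpa [hr] using hball r

theorem degree_induce_eq_ncard {s : Set V} (a : s) [Fintype ((G.induce s).neighborSet a)] :
    (G.induce s).degree a = (s ∩ G.neighborSet a).ncard := by
  rw [← card_neighborSet_eq_degree, ← Nat.card_eq_fintype_card, Nat.card_coe_set_eq,
    ← Set.ncard_image_of_injective _ Subtype.val_injective]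
  congr 1
  ext x
  simp [and_comm]

theorem ncard_le_mul_of_colorable_induce {s : Set V} (hs : s.Finite) {n d : ℕ}
    (hc : (G.induce s).Colorable d) (hfree : G.IndepSetFreeOn s (n + 1)) :
    s.ncard ≤ n * d := by
  obtain ⟨C⟩ := hc
  have : Fintype s := hs.fintype
  have hclass (c : Fin d) : #{x | C x = c} ≤ n := by
    by_contra! hlt
    obtain ⟨t, hts, ht⟩ := exists_subset_card_eq hlt
    refine hfree (t := t.map (.subtype _)) (by simp) ⟨?_, by simpa using ht⟩
    simp only [coe_map, Function.Embedding.coe_subtype]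
    rintro _ ⟨x, hx, rfl⟩ _ ⟨y, hy, rfl⟩ hxy hadj
    have hx := (mem_filter.mp (hts hx)).2
    have hy := (mem_filter.mp (hts hy)).2
    exact C.valid (v := x) (w := y) (by simpa using hadj) (hx.trans hy.symm)
  calc s.ncard = #(univ : Finset s) := by
        rw [card_univ, ← Nat.card_coe_set_eq, Nat.card_eq_fintype_card]
    _ ≤ n * #(univ : Finset (Fin d)) :=
      card_le_mul_card_image_of_maps_to (f := C) (fun _ _ => mem_univ _) n fun c _ => hclass c
    _ = n * d := by simp

/-- Three independent common neighbours of an edge `aw` would induce `co-(K₃ + 2P₁)`. -/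
theorem indepSetFreeOn_three_of_hFree_coK3Plus2P1 (hG : HFree coK3Plus2P1 G) {a w : V}
    (haw : G.Adj a w) {s : Set V} (hs : ∀ x ∈ s, G.Adj a x ∧ G.Adj w x) :
    G.IndepSetFreeOn s 3 := by
  classical
  intro t hts ht
  obtain ⟨x, y, z, hxy, hxz, hyz, rfl⟩ := card_eq_three.mp ht.card_eq
  have hind := ht.isIndepSet
  simp only [coe_insert, coe_singleton, Set.insert_subset_iff, Set.singleton_subset_iff] at hts
  obtain ⟨⟨hax, hwx⟩, ⟨hay, hwy⟩, ⟨haz, hwz⟩⟩ := And.imp (hs x) (And.imp (hs y) (hs z)) hts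
  have hnxy : ¬ G.Adj x y := hind (by simp) (by simp) hxy
  have hnxz : ¬ G.Adj x z := hind (by simp) (by simp) hxz
  have hnyz : ¬ G.Adj y z := hind (by simp) (by simp) hyz
  let f : Fin 5 → V := ![x, y, z, a, w]
  have hadj (i j : Fin 5) : G.Adj (f i) (f j) ↔ coK3Plus2P1.Adj i j := by
    fin_cases i <;> fin_cases j <;> simp [f, coK3Plus2P1, *, G.adj_comm]
  have hinj : Function.Injective f := by
    intro i j hij
    by_contra hne
    have hnadj : ¬ coK3Plus2P1.Adj i j := by rw [← hadj, hij]; exact G.irrefl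
    fin_cases i <;> fin_cases j <;>
      simp [f, coK3Plus2P1, hxy, hxz, hyz, hxy.symm, hxz.symm, hyz.symm] at hij hne hnadj
  exact hG.false ⟨⟨f, hinj⟩, hadj _ _⟩

end SimpleGraph

theorem stmt5 : ∃ B : ℕ → ℕ → ℕ → ℕ,
    ∀ (m c d : ℕ) (V : Type) [Fintype V] (G : SimpleGraph V),
      HFree (pathGraph m) G → HFree coK3Plus2P1 G →
      ∀ S T : Set V, Disjoint S T → S.ncard ≤ c →
        (G.induce T).chromaticNumber ≤ (d : ℕ∞) →
        (G.induce (T ∪ S)).Connected →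
        (∀ u ∈ S, ∀ x₁ ∈ T, ∀ x₂ ∈ T, x₁ ≠ x₂ → ¬ G.Adj x₁ x₂ →
          (¬ G.Adj u x₁ ∨ ¬ G.Adj u x₂)) →
        (∃ w, w ∉ S ∪ T ∧ ∀ x ∈ S ∪ T, G.Adj w x) →
        T.ncard ≤ B m c d := by
  classical
  refine ⟨fun m c d => (2 * d + c + 1) ^ m, ?_⟩
  rintro m c d V _ G hP hK S T - hS hχ hconn - ⟨w, -, hw⟩
  rw [Set.union_comm] at hw
  have hcol := chromaticNumber_le_iff_colorable.mp hχ
  have hT (a : V) (ha : a ∈ T ∪ S) : (T ∩ G.neighborSet a).ncard ≤ 2 * d :=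
    ncard_le_mul_of_colorable_induce (Set.toFinite _)
      (hcol.of_hom (induceHomOfLE G Set.inter_subset_left).toHom)
      (indepSetFreeOn_three_of_hFree_coK3Plus2P1 hK (hw a ha).symm
        fun x hx => ⟨hx.2, hw x (.inl hx.1)⟩)
  have hdeg (a : ↥(T ∪ S)) : (G.induce (T ∪ S)).degree a ≤ 2 * d + c := by
    rw [degree_induce_eq_ncard]
    calc _ ≤ (T ∩ G.neighborSet a ∪ S).ncard :=
          Set.ncard_le_ncard (by rintro x ⟨hx | hx, hxa⟩ <;> simp [*])
      _ ≤ 2 * d + c := (Set.ncard_union_le _ _).trans (add_le_add (hT a a.2) hS)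
  have hdist (u v : ↥(T ∪ S)) : (G.induce (T ∪ S)).dist u v ≤ m :=
    (Nat.le_succ _).trans ((hconn u v).dist_add_one_lt_of_hFree_pathGraph (hP.induce _)).le
  obtain ⟨u⟩ := hconn.nonempty
  calc T.ncard ≤ (T ∪ S).ncard := Set.ncard_le_ncard Set.subset_union_left
    _ = Fintype.card ↥(T ∪ S) := by rw [← Nat.card_coe_set_eq, Nat.card_eq_fintype_card]
    _ ≤ (2 * d + c + 1) ^ m := hconn.card_le_pow_of_degree_le_of_dist_le hdeg u (hdist u)
end

section
/- In a connected (P_5, claw)-free graph G, every vertex is at distance at most 3 from any fixed vertex u, and for any vertex v at distance i from u, the set of neighbors of v at distance i+1 from u contains no stable set of size 3. -/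
open SimpleGraph

/-!
A shortest walk from `u` has no chords: its `i`-th vertex is at distance exactly `i` from `u`,
and adjacent vertices are at distances differing by at most one. So a vertex at distance `4`
from `u` yields an induced `P₅`. Three pairwise nonadjacent neighbours of `v` form a claw
centred at `v`, whatever their distances from `u`.
-/

namespace SimpleGraph

variable {V : Type*} {G : SimpleGraph V}

namespace Walk

variable {u v : V} {p : G.Walk u v}

lemma dist_getVert_of_length_eq_dist (hp : p.length = G.dist u v) {i : ℕ} (hi : i ≤ p.length) :
    G.dist u (p.getVert i) = i := by
  have h := length_eq_dist_of_subwalk hp (p.isSubwalk_take i)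
  rw [take_length] at h
  omega

lemma adj_getVert_iff_of_length_eq_dist_s7 (hp : p.length = G.dist u v) {i j : ℕ}
    (hi : i ≤ p.length) (hj : j ≤ p.length) :
    G.Adj (p.getVert i) (p.getVert j) ↔ i + 1 = j ∨ j + 1 = i := by
  constructor
  · intro h
    have hne : i ≠ j := by rintro rfl; exact h.ne rfl
    have := h.diff_dist_adj (u := u)
    rw [dist_getVert_of_length_eq_dist hp hi, dist_getVert_of_length_eq_dist hp hj] at this
    omega
  · rintro (rfl | rfl)
    · exact p.adj_getVert_succ (by omega)
    · exact (p.adj_getVert_succ (by omega)).symm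

def pathGraphEmbeddingOfLengthEqDist (hp : p.length = G.dist u v) {n : ℕ} (hn : n ≤ p.length) :
    pathGraph (n + 1) ↪g G where
  toFun k := p.getVert k
  inj' k l hkl := Fin.ext <| by
    simpa only [dist_getVert_of_length_eq_dist hp (by omega : (k : ℕ) ≤ p.length),
      dist_getVert_of_length_eq_dist hp (by omega : (l : ℕ) ≤ p.length)]
      using congrArg (G.dist u) hkl
  map_rel_iff' {k l} := by
    simp only [pathGraph_adj]
    exact adj_getVert_iff_of_length_eq_dist_s7 hp (by omega) (by omega)

end Walk

lemma Reachable.dist_lt_of_hFree_pathGraph {n : ℕ} (hP : HFree (pathGraph (n + 1)) G) {u v : V}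
    (h : G.Reachable u v) : G.dist u v < n := by
  obtain ⟨p, hp⟩ := h.exists_walk_length_eq_dist
  by_contra! hn
  exact hP.false (p.pathGraphEmbeddingOfLengthEqDist hp (hp ▸ hn))

end SimpleGraph

lemma starGraph_eq_starGraph_zero (s : ℕ) : _root_.starGraph s = SimpleGraph.starGraph 0 := by
  ext i j
  simp only [_root_.starGraph, SimpleGraph.starGraph, fromRel_adj, ← Fin.val_eq_zero_iff]

lemma HFree.adj_among_neighbors_of_starGraph_three {V : Type*} {G : SimpleGraph V}
    (hclaw : HFree (_root_.starGraph 3) G) {v a b c : V} (ha : G.Adj v a) (hb : G.Adj v b)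
    (hc : G.Adj v c) (hab : a ≠ b) (hac : a ≠ c) (hbc : b ≠ c) :
    G.Adj a b ∨ G.Adj a c ∨ G.Adj b c := by
  by_contra! hind
  obtain ⟨hnab, hnac, hnbc⟩ := hind
  have hnba : ¬G.Adj b a := fun h => hnab h.symm
  have hnca : ¬G.Adj c a := fun h => hnac h.symm
  have hncb : ¬G.Adj c b := fun h => hnbc h.symm
  rw [HFree, starGraph_eq_starGraph_zero] at hclaw
  refine hclaw.false ⟨⟨![v, a, b, c], fun x y hxy => ?_⟩, @fun x y => ?_⟩
  · fin_cases x <;> fin_cases y <;> simp_all [ha.ne, hb.ne, hc.ne, ha.ne', hb.ne', hc.ne']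
  · change G.Adj (![v, a, b, c] x) (![v, a, b, c] y) ↔ _
    fin_cases x <;> fin_cases y <;> simp_all [starGraph_adj, ha.symm, hb.symm, hc.symm]

theorem stmt7_general {V : Type*} (G : SimpleGraph V) (hconn : G.Connected)
    (hP5 : HFree (pathGraph 5) G) (hclaw : HFree (_root_.starGraph 3) G) (u : V) :
    (∀ v : V, G.dist u v ≤ 3) ∧
    (∀ v : V, ∀ i : ℕ, G.dist u v = i →
      ¬ ∃ a b c : V, a ≠ b ∧ a ≠ c ∧ b ≠ c ∧
        (G.Adj v a ∧ G.dist u a = i + 1) ∧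
        (G.Adj v b ∧ G.dist u b = i + 1) ∧
        (G.Adj v c ∧ G.dist u c = i + 1) ∧
        ¬ G.Adj a b ∧ ¬ G.Adj a c ∧ ¬ G.Adj b c) := by
  refine ⟨fun v => Nat.le_of_lt_succ ((hconn u v).dist_lt_of_hFree_pathGraph hP5), ?_⟩
  rintro v i - ⟨a, b, c, hab, hac, hbc, ⟨ha, -⟩, ⟨hb, -⟩, ⟨hc, -⟩, hnab, hnac, hnbc⟩
  rcases hclaw.adj_among_neighbors_of_starGraph_three ha hb hc hab hac hbc with h | h | h
  exacts [hnab h, hnac h, hnbc h]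

theorem stmt7 {V : Type*} [Fintype V] (G : SimpleGraph V) (hconn : G.Connected)
    (hP5 : HFree (pathGraph 5) G) (hclaw : HFree (_root_.starGraph 3) G) (u : V) :
    (∀ v : V, G.dist u v ≤ 3) ∧
    (∀ v : V, ∀ i : ℕ, G.dist u v = i →
      ¬ ∃ a b c : V, a ≠ b ∧ a ≠ c ∧ b ≠ c ∧
        (G.Adj v a ∧ G.dist u a = i + 1) ∧
        (G.Adj v b ∧ G.dist u b = i + 1) ∧
        (G.Adj v c ∧ G.dist u c = i + 1) ∧
        ¬ G.Adj a b ∧ ¬ G.Adj a c ∧ ¬ G.Adj b c) :=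
  stmt7_general G hconn hP5 hclaw u
end

section
/- Let G be a P_5-free graph containing an induced copy C of the complement of C_{2t+1} (t ≥ 2), with vertices v_1,...,v_{2t+1} where v_i v_j ∈ E if and only if |i−j| > 1 (indices mod 2t+1). Then no vertex outside C has exactly one neighbor on C. -/
open SimpleGraph

/- If `x` sees only `v i` on the antihole, then `x, v i, v (i + 2), v (i - 1), v (i + 1)` is an induced
`P₅`: along `v i, v (i + 2), v (i - 1), v (i + 1)` the cyclic distances are `2, 3, 2`, so these are
edges of the antihole once it has at least five vertices, while `v (i - 1), v i, v (i + 1), v (i + 2)`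
are consecutive on the cycle, which gives the three non-edges among them. -/

section

open Fin.CommRing

theorem Fin.ne_of_sub_eq_natCast {n d : ℕ} [NeZero n] {u v : Fin n} (hd0 : 0 < d) (hdn : d < n)
    (h : v - u = (d : Fin n)) : u ≠ v := by
  rintro rfl
  rw [sub_self, eq_comm, Fin.natCast_eq_zero] at h
  exact Nat.not_dvd_of_pos_of_lt hd0 hdn h

namespace SimpleGraph

variable {W V : Type*} {G : SimpleGraph V}

theorem injective_of_adj_iff {H : SimpleGraph W} (hH : Function.Injective H.neighborSet)
    {p : W → V} (hp : ∀ u v, G.Adj (p u) (p v) ↔ H.Adj u v) : Function.Injective p := by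
  intro u v huv
  apply hH
  ext w
  rw [mem_neighborSet, mem_neighborSet, ← hp, ← hp, huv]

theorem pathGraph_five_neighborSet_injective : Function.Injective (pathGraph 5).neighborSet := by
  intro u v h
  have hw : ∀ w, (pathGraph 5).Adj u w ↔ (pathGraph 5).Adj v w := fun w => Set.ext_iff.1 h w
  simp only [pathGraph_adj] at hw
  clear h
  revert u v
  decide

theorem not_hFree_pathGraph_five {a b c d e : V}
    (hab : G.Adj a b) (hbc : G.Adj b c) (hcd : G.Adj c d) (hde : G.Adj d e)
    (hac : ¬G.Adj a c) (had : ¬G.Adj a d) (hae : ¬G.Adj a e)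
    (hbd : ¬G.Adj b d) (hbe : ¬G.Adj b e) (hce : ¬G.Adj c e) :
    ¬HFree (pathGraph 5) G := by
  have hp : ∀ u v, G.Adj (![a, b, c, d, e] u) (![a, b, c, d, e] v) ↔ (pathGraph 5).Adj u v := by
    intro u v
    fin_cases u <;> fin_cases v <;>
      simp [pathGraph_adj, hab, hbc, hcd, hde, hac, had, hae, hbd, hbe, hce, hab.symm, hbc.symm,
        hcd.symm, hde.symm, mt Adj.symm hac, mt Adj.symm had, mt Adj.symm hae, mt Adj.symm hbd,
        mt Adj.symm hbe, mt Adj.symm hce]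
  exact fun hP5 => hP5.false
    ⟨⟨_, injective_of_adj_iff pathGraph_five_neighborSet_injective hp⟩, hp _ _⟩

theorem compl_cycleGraph_adj_of_sub_eq {n d : ℕ} [NeZero n] {u v : Fin n} (hd1 : 1 < d)
    (hdn : d + 1 < n) (h : v - u = (d : Fin n)) : ((cycleGraph n)ᶜ).Adj u v := by
  refine (compl_adj _ _ _).2 ⟨Fin.ne_of_sub_eq_natCast (by omega) (by omega) h, fun hc => ?_⟩
  rcases cycleGraph_adj'.1 hc with huv | hvu
  · have h1 : u - v = 1 := Fin.ext (by rw [huv, Fin.val_one', Nat.mod_eq_of_lt (by omega)])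
    have hd : ((d + 1 : ℕ) : Fin n) = 0 := by rw [Nat.cast_succ, ← h, ← h1]; abel
    exact Nat.not_dvd_of_pos_of_lt (by omega) hdn (Fin.natCast_eq_zero.1 hd)
  · rw [h, Fin.val_cast_of_lt (by omega)] at hvu
    omega

theorem compl_cycleGraph_not_adj_of_sub_eq_one {n : ℕ} {u v : Fin (n + 2)} (h : v - u = 1) :
    ¬((cycleGraph (n + 2))ᶜ).Adj u v :=
  fun hc => ((compl_adj _ _ _).1 hc).2 (cycleGraph_adj.2 (Or.inr h))

theorem not_existsUnique_adj_of_compl_cycleGraph_embedding {n : ℕ} (hn : 5 ≤ n)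
    (hP5 : HFree (pathGraph 5) G) (f : (cycleGraph n)ᶜ ↪g G) (x : V) :
    ¬∃! i, G.Adj x (f i) := by
  obtain ⟨m, rfl⟩ : ∃ m, n = m + 5 := ⟨n - 5, by omega⟩
  rintro ⟨i, hxi, huniq⟩
  have hx : ∀ j, i ≠ j → ¬G.Adj x (f j) := fun j hj hxj => hj (huniq j hxj).symm
  refine not_hFree_pathGraph_five (b := f i) (c := f (i + 2)) (d := f (i - 1)) (e := f (i + 1))
    hxi ?_ ?_ ?_ (hx _ ?_) (hx _ ?_) (hx _ ?_) ?_ ?_ ?_ hP5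
  · exact f.map_adj_iff.2 (compl_cycleGraph_adj_of_sub_eq (d := 2) (by omega) (by omega)
      (by push_cast; ring))
  · exact (f.map_adj_iff.2 (compl_cycleGraph_adj_of_sub_eq (d := 3) (by omega) (by omega)
      (by push_cast; ring))).symm
  · exact f.map_adj_iff.2 (compl_cycleGraph_adj_of_sub_eq (d := 2) (by omega) (by omega)
      (by push_cast; ring))
  · exact Fin.ne_of_sub_eq_natCast (d := 2) (by omega) (by omega) (by push_cast; ring)
  · exact (Fin.ne_of_sub_eq_natCast (d := 1) (by omega) (by omega) (by push_cast; ring)).symm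
  · exact Fin.ne_of_sub_eq_natCast (d := 1) (by omega) (by omega) (by push_cast; ring)
  · exact fun h => compl_cycleGraph_not_adj_of_sub_eq_one (by ring) (f.map_adj_iff.1 h.symm)
  · exact fun h => compl_cycleGraph_not_adj_of_sub_eq_one (by ring) (f.map_adj_iff.1 h)
  · exact fun h => compl_cycleGraph_not_adj_of_sub_eq_one (by ring) (f.map_adj_iff.1 h.symm)

end SimpleGraph

end

theorem stmt8 {V : Type*} (G : SimpleGraph V) (hP5 : HFree (pathGraph 5) G)
    (t : ℕ) (ht : 2 ≤ t) (f : ((cycleGraph (2 * t + 1))ᶜ) ↪g G) :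
    ∀ x : V, x ∉ Set.range f → ¬ ∃! i : Fin (2 * t + 1), G.Adj x (f i) :=
  fun x _ => SimpleGraph.not_existsUnique_adj_of_compl_cycleGraph_embedding (by omega) hP5 f x
end

section
/- Let G be a (P_5, K_{1,4}+P_1)-free graph with χ(G) ≤ k−1, containing an induced antihole C = complement of C_{2t+1} (2 ≤ t, vertices v_1,...,v_{2t+1} with v_i v_j ∈ E iff |i−j|>1). For any nonempty proper subset X of V(C) with 1 ≤ |X| ≤ 2t, the set S(X) of vertices outside C whose neighborhood on C is exactly X has stability number at most 3, and hence |S(X)| ≤ R(4, k−2). -/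
open SimpleGraph

/-- `n` has the Ramsey property for `(s, t)`: every simple graph on `n` vertices
contains a stable set of size `s` or a clique of size `t`. -/
def HasRamseyProp (n s t : ℕ) : Prop :=
  ∀ G : SimpleGraph (Fin n),
    (∃ A : Set (Fin n), A.ncard = s ∧ ∀ a ∈ A, ∀ b ∈ A, a ≠ b → ¬ G.Adj a b) ∨
    (∃ B : Set (Fin n), B.ncard = t ∧ ∀ a ∈ B, ∀ b ∈ B, a ≠ b → G.Adj a b)

/-- The Ramsey number `R(s, t)`. -/
noncomputable def ramseyNum (s t : ℕ) : ℕ := sInf {n | HasRamseyProp n s t}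

/-!
Pick `i ∈ X` with `i + 1 ∉ X`. The antihole vertices `vᵢ` and `vᵢ₊₁` are non-adjacent, and every
vertex of `S(X)` sees `vᵢ` but not `vᵢ₊₁`; so a stable set of size 4 in `S(X)` would be the set of
leaves of an induced `K_{1,4}+P_1` centred at `vᵢ` with `vᵢ₊₁` isolated.

For the bound, if `X` contains an edge `vₐv_b` of the antihole, every clique of `S(X)` extends by
`vₐ, v_b`; as `G` is `K_k`-free, `S(X)` has no clique of size `k - 2` and Ramsey's theorem gives
`|S(X)| < R(4, k - 2)`. Otherwise `X` is stable in the antihole, hence `i + 2 ∉ X`, and `vᵢ₊₂` can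
be added as a fourth leaf to any stable set of `S(X)`: so `α(S(X)) ≤ 2`. Since `S(X)` lies in the
neighbourhood of `vᵢ`, a `(k - 1)`-colouring of `G` uses only `k - 2` colours on it, whence
`|S(X)| ≤ 2(k - 2) ≤ R(4, k - 2)`.
-/

open Finset SimpleGraph

theorem Finset.exists_fin_embedding_of_le_card {α : Type*} {s : Finset α} {m : ℕ}
    (h : m ≤ s.card) : ∃ e : Fin m ↪ α, ∀ i, e i ∈ s :=
  ⟨(Fin.castLEEmb h).trans (s.equivFin.symm.toEmbedding.trans (Function.Embedding.subtype _)),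
    fun _ => (s.equivFin.symm _).2⟩

theorem hasRamseyProp_iff {n s t : ℕ} : HasRamseyProp n s t ↔
    ∀ G : SimpleGraph (Fin n), (∃ A, G.IsNIndepSet s A) ∨ ∃ B, G.IsNClique t B := by
  classical
  refine forall_congr' fun G => or_congr ⟨?_, ?_⟩ ⟨?_, ?_⟩
  · rintro ⟨A, hA, hind⟩
    exact ⟨A.toFinset, by simpa [isIndepSet_iff, Set.Pairwise] using hind,
      by rw [← hA, Set.ncard_eq_toFinset_card']⟩
  · rintro ⟨A, hA⟩
    exact ⟨A, by rw [Set.ncard_coe_finset, hA.card_eq], hA.isIndepSet⟩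
  · rintro ⟨B, hB, hcl⟩
    exact ⟨B.toFinset, by simpa [isClique_iff, Set.Pairwise] using hcl,
      by rw [← hB, Set.ncard_eq_toFinset_card']⟩
  · rintro ⟨B, hB⟩
    exact ⟨B, by rw [Set.ncard_coe_finset, hB.card_eq], hB.isClique⟩

theorem HasRamseyProp.exists_of_le_card {V : Type*} {m s t : ℕ} (h : HasRamseyProp m s t)
    (G : SimpleGraph V) {S : Finset V} (hm : m ≤ S.card) :
    (∃ A ⊆ S, G.IsNIndepSet s A) ∨ ∃ B ⊆ S, G.IsNClique t B := by
  obtain ⟨e, he⟩ := exists_fin_embedding_of_le_card hm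
  have hsub (A : Finset (Fin m)) : A.map e ⊆ S := by
    intro v hv
    obtain ⟨i, -, rfl⟩ := mem_map.1 hv
    exact he i
  rcases hasRamseyProp_iff.1 h (G.comap e) with ⟨A, hA⟩ | ⟨B, hB⟩
  · refine .inl ⟨A.map e, hsub A, ?_, by rw [card_map, hA.card_eq]⟩
    rw [coe_map, isIndepSet_iff, e.injective.injOn.pairwise_image]
    exact hA.isIndepSet
  · refine .inr ⟨B.map e, hsub B, ?_, by rw [card_map, hB.card_eq]⟩
    rw [coe_map, isClique_iff, e.injective.injOn.pairwise_image]
    exact hB.isClique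

theorem HasRamseyProp.succ {s t n₁ n₂ : ℕ} (h₁ : HasRamseyProp n₁ s (t + 1))
    (h₂ : HasRamseyProp n₂ (s + 1) t) : HasRamseyProp (n₁ + n₂ + 1) (s + 1) (t + 1) := by
  classical
  refine hasRamseyProp_iff.2 fun G => ?_
  set N := (univ.erase 0).filter (G.Adj 0)
  set M := (univ.erase 0).filter (fun v => ¬ G.Adj 0 v)
  have hNM : N.card + M.card = n₁ + n₂ := by
    rw [card_filter_add_card_filter_not, card_erase_of_mem (mem_univ _), card_univ,
      Fintype.card_fin, Nat.add_sub_cancel]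
  rcases le_or_gt n₁ M.card with hM | hN
  · rcases h₁.exists_of_le_card G hM with ⟨A, hAM, hA⟩ | ⟨B, -, hB⟩
    · refine .inl ⟨insert 0 A, (isNClique_compl G).1 <| ((isNClique_compl G).2 hA).insert
        fun v hv => ?_⟩
      simpa [M, compl_adj, eq_comm] using hAM hv
    · exact .inr ⟨B, hB⟩
  · rcases h₂.exists_of_le_card G (by omega : n₂ ≤ N.card) with ⟨A, -, hA⟩ | ⟨B, hBN, hB⟩
    · exact .inl ⟨A, hA⟩
    · exact .inr ⟨_, hB.insert fun v hv => (mem_filter.1 (hBN hv)).2⟩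

theorem exists_hasRamseyProp : ∀ s t : ℕ, ∃ n, HasRamseyProp n s t
  | 0, _ => ⟨0, fun _ => .inl ⟨∅, by simp, by simp⟩⟩
  | _ + 1, 0 => ⟨0, fun _ => .inr ⟨∅, by simp, by simp⟩⟩
  | s + 1, t + 1 =>
    have ⟨_, h₁⟩ := exists_hasRamseyProp s (t + 1)
    have ⟨_, h₂⟩ := exists_hasRamseyProp (s + 1) t
    ⟨_, h₁.succ h₂⟩

theorem hasRamseyProp_ramseyNum (s t : ℕ) : HasRamseyProp (ramseyNum s t) s t :=
  Nat.sInf_mem (exists_hasRamseyProp s t)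

theorem ncard_lt_ramseyNum {V : Type*} [Finite V] {G : SimpleGraph V} {s t : ℕ} {S : Set V}
    (hind : ∀ A : Finset V, ↑A ⊆ S → ¬ G.IsNIndepSet s A)
    (hcl : ∀ B : Finset V, ↑B ⊆ S → ¬ G.IsNClique t B) : S.ncard < ramseyNum s t := by
  have hS := S.toFinite
  by_contra! h
  rw [Set.ncard_eq_toFinset_card S hS] at h
  rcases (hasRamseyProp_ramseyNum s t).exists_of_le_card G h with ⟨A, hA, h⟩ | ⟨B, hB, h⟩
  exacts [hind A (hS.subset_toFinset.1 hA) h, hcl B (hS.subset_toFinset.1 hB) h]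

/-- Witness: `s` disjoint cliques with `q` vertices each. -/
theorem HasRamseyProp.mul_lt {n s q : ℕ} (h : HasRamseyProp n (s + 1) (q + 1)) : s * q < n := by
  by_contra! hn
  have hlt (a : Fin n) : a.val < q * s := by have := a.isLt; rw [mul_comm]; omega
  let G := SimpleGraph.fromRel fun a b : Fin n => a.val / q = b.val / q
  rcases h G with ⟨A, hA, hind⟩ | ⟨B, hB, hcl⟩
  · have : A.ncard ≤ (Set.Iio s).ncard := by
      refine Set.ncard_le_ncard_of_injOn (fun a => a.val / q)
        (fun a _ => Nat.div_lt_of_lt_mul (hlt a)) (fun a ha b hb hab => ?_) (Set.finite_Iio s)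
      by_contra hne
      exact hind a ha b hb hne ((fromRel_adj _ _ _).2 ⟨hne, .inl hab⟩)
    simp [hA] at this
  · have : B.ncard ≤ (Set.Iio q).ncard := by
      refine Set.ncard_le_ncard_of_injOn (fun a => a.val % q)
        (fun a _ => Nat.mod_lt _ (Nat.pos_of_ne_zero fun hq => by simpa [hq] using hlt a))
        (fun a ha b hb hab => ?_) (Set.finite_Iio q)
      by_contra hne
      have hdiv : a.val / q = b.val / q :=
        ((fromRel_adj _ _ _).1 (hcl a ha b hb hne)).2.elim id Eq.symm
      refine hne (Fin.ext ?_)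
      rw [← Nat.div_add_mod a q, ← Nat.div_add_mod b q, hdiv]
      exact congrArg _ hab
    simp [hB] at this

section StarPlusP1

variable {V : Type*} {G : SimpleGraph V}

theorem nonempty_starPlusP1_embedding {s : ℕ} {u w : V} (e : Fin s ↪ V) (hne : u ≠ w)
    (huw : ¬ G.Adj u w) (hu : ∀ i, G.Adj u (e i)) (hw : ∀ i, ¬ G.Adj (e i) w)
    (hind : ∀ i j, ¬ G.Adj (e i) (e j)) : Nonempty (starPlusP1 s ↪g G) := by
  let v : Fin (s + 2) → V := Fin.cons u (Fin.snoc (α := fun _ => V) e w)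
  have hcases (i : Fin (s + 2)) :
      i = 0 ∨ i = Fin.last (s + 1) ∨ ∃ k : Fin s, i = k.castSucc.succ := by
    rcases Fin.eq_zero_or_eq_succ i with rfl | ⟨j, rfl⟩
    · exact .inl rfl
    · rcases Fin.eq_castSucc_or_eq_last j with ⟨k, rfl⟩ | rfl
      · exact .inr (.inr ⟨k, rfl⟩)
      · exact .inr (.inl rfl)
  have hue (i : Fin s) : u ≠ e i := (hu i).ne
  have hew (i : Fin s) : e i ≠ w := fun h => huw (h ▸ hu i)
  have hinj : Function.Injective v := by
    intro i j hij
    rcases hcases i with rfl | rfl | ⟨k, rfl⟩ <;> rcases hcases j with rfl | rfl | ⟨l, rfl⟩ <;>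
      simp_all [v, ← Fin.succ_last, eq_comm]
  refine ⟨⟨⟨v, hinj⟩, fun {i j} => ?_⟩⟩
  rcases hcases i with rfl | rfl | ⟨k, rfl⟩ <;> rcases hcases j with rfl | rfl | ⟨l, rfl⟩ <;>
    simp [v, starPlusP1, ← Fin.succ_last, G.adj_comm _ u, G.adj_comm w,
      eq_comm (a := (0 : Fin _)), *]

theorem HFree.card_lt_of_isIndepSet {s : ℕ} (hH : HFree (starPlusP1 s) G) {u w : V}
    (hne : u ≠ w) (huw : ¬ G.Adj u w) {A : Finset V} (hA : G.IsIndepSet A)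
    (hu : ∀ a ∈ A, G.Adj u a) (hw : ∀ a ∈ A, ¬ G.Adj a w) : A.card < s := by
  by_contra! h
  obtain ⟨e, he⟩ := exists_fin_embedding_of_le_card h
  exact hH.false <| Classical.choice <| nonempty_starPlusP1_embedding e hne huw
    (fun i => hu _ (he i)) (fun i => hw _ (he i)) fun i j h => hA (he i) (he j) h.ne h

end StarPlusP1

namespace Fin

variable {n : ℕ} [NeZero n]

theorem add_one_add_one (i : Fin n) : i + 1 + 1 = i + 2 := by
  rw [add_assoc]; congr 1; ext; simp [Fin.val_add]

open Fin.NatCast in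
theorem exists_mem_add_one_notMem {X : Set (Fin n)} (h₁ : X.Nonempty) (h₂ : X ≠ Set.univ) :
    ∃ i ∈ X, i + 1 ∉ X := by
  by_contra! h
  obtain ⟨i, hi⟩ := h₁
  have key (m : ℕ) : i + m ∈ X := by
    induction m with
    | zero => simpa using hi
    | succ m ih => simpa [Nat.cast_succ, ← add_assoc] using h _ ih
  exact h₂ (Set.eq_univ_of_forall fun j => by simpa using key (j - i).val)

end Fin

namespace SimpleGraph

section Antihole

variable {n : ℕ} [NeZero n]

theorem compl_cycleGraph_not_adj_add_one (i : Fin n) : ¬ (cycleGraph n)ᶜ.Adj i (i + 1) := by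
  rw [compl_adj, cycleGraph_adj', add_sub_cancel_left]
  rintro ⟨hne, hadj⟩
  rcases Nat.lt_or_ge 1 n with hn | hn
  · exact hadj (.inr (Fin.val_cast_of_lt hn))
  · exact hne (@Subsingleton.elim _ (Fin.subsingleton_iff_le_one.2 hn) _ _)

theorem compl_cycleGraph_adj_add_two (hn : 4 ≤ n) (i : Fin n) :
    (cycleGraph n)ᶜ.Adj i (i + 2) := by
  rw [compl_adj, cycleGraph_adj', add_sub_cancel_left, Ne, left_eq_add, sub_add_cancel_left]
  simp only [Fin.ext_iff, Fin.val_neg, Fin.val_zero]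
  simp [Nat.mod_eq_of_lt (by omega : 2 < n)]
  omega

/-- `i ↦ 2i` maps the odd cycle `C_n` into its complement. -/
theorem compl_cycleGraph_not_colorable_two (hn : 5 ≤ n) (hodd : Odd n) :
    ¬ (cycleGraph n)ᶜ.Colorable 2 := by
  have hadj {i j : Fin n} (h : (j - i).val = 1) : (cycleGraph n)ᶜ.Adj (i + i) (j + j) := by
    obtain rfl : j = i + 1 := by
      rw [← sub_eq_iff_eq_add']; exact Fin.ext (h.trans (Fin.val_cast_of_lt (by omega)).symm)
    rw [add_add_add_comm, ← add_assoc, Fin.add_one_add_one]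
    exact compl_cycleGraph_adj_add_two (by omega) _
  let φ : cycleGraph n →g (cycleGraph n)ᶜ :=
    ⟨fun i => i + i, fun hij => (cycleGraph_adj'.1 hij).elim (fun h => (hadj h).symm) hadj⟩
  intro h
  have := (h.of_hom φ).chromaticNumber_le
  rw [chromaticNumber_cycleGraph_of_odd n (by omega) hodd] at this
  norm_num at this

end Antihole

variable {V W : Type*} {G : SimpleGraph V} {H : SimpleGraph W}

theorem ncard_le_mul_of_colorable [Finite V] {c m : ℕ} (hcol : G.Colorable c) {v : V}
    {S : Set V} (hS : ∀ x ∈ S, G.Adj v x)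
    (hind : ∀ A : Finset V, ↑A ⊆ S → G.IsIndepSet A → A.card ≤ m) : S.ncard ≤ m * (c - 1) := by
  classical
  obtain ⟨C⟩ := hcol
  have hfin := S.toFinite
  rw [Set.ncard_eq_toFinset_card S hfin, ← Fintype.card_fin c, ← card_univ,
    ← card_erase_of_mem (mem_univ (C v))]
  refine card_le_mul_card_image_of_maps_to (fun x hx => mem_erase.2
    ⟨(C.valid (hS x (hfin.mem_toFinset.1 hx))).symm, mem_univ _⟩) m fun c _ => hind _ ?_ ?_
  · exact hfin.subset_toFinset.1 (filter_subset _ _)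
  · intro x hx y hy _ hxy
    simp only [coe_filter, Set.mem_ofPred_eq] at hx hy
    exact C.valid hxy (hx.2.trans hy.2.symm)

/-- The set `S(X)` of the paper. -/
def attachSet (f : H ↪g G) (X : Set W) : Set V :=
  {x | x ∉ Set.range f ∧ ∀ i, G.Adj x (f i) ↔ i ∈ X}

variable {f : H ↪g G} {X : Set W} {x : V}

theorem notMem_range_of_mem_attachSet (hx : x ∈ attachSet f X) : x ∉ Set.range f := hx.1

theorem adj_of_mem_attachSet (hx : x ∈ attachSet f X) {i : W} (hi : i ∈ X) : G.Adj (f i) x :=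
  ((hx.2 i).2 hi).symm

theorem not_adj_of_mem_attachSet (hx : x ∈ attachSet f X) {j : W} (hj : j ∉ X) :
    ¬ G.Adj x (f j) :=
  fun h => hj ((hx.2 j).1 h)

theorem card_lt_of_subset_attachSet {s : ℕ} (hH : HFree (starPlusP1 s) G) {i j : W}
    (hi : i ∈ X) (hj : j ∉ X) (hij : ¬ H.Adj i j) {A : Finset V}
    (hA : ↑A ⊆ attachSet f X) (hind : G.IsIndepSet A) : A.card < s :=
  hH.card_lt_of_isIndepSet (f.injective.ne fun h : i = j => hj (h ▸ hi)) (by rwa [f.map_adj_iff])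
    hind (fun _ ha => adj_of_mem_attachSet (hA ha) hi)
    (fun _ ha => not_adj_of_mem_attachSet (hA ha) hj)

theorem card_add_one_lt_of_subset_attachSet {s : ℕ} (hH : HFree (starPlusP1 s) G) {i j l : W}
    (hi : i ∈ X) (hj : j ∉ X) (hl : l ∉ X) (hij : ¬ H.Adj i j) (hil : H.Adj i l)
    (hjl : ¬ H.Adj j l) {A : Finset V} (hA : ↑A ⊆ attachSet f X) (hind : G.IsIndepSet A) :
    A.card + 1 < s := by
  classical
  have hlA : f l ∉ A := fun h => notMem_range_of_mem_attachSet (hA h) ⟨l, rfl⟩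
  rw [← card_insert_of_notMem hlA]
  refine hH.card_lt_of_isIndepSet (f.injective.ne fun h : i = j => hj (h ▸ hi))
    (by rwa [f.map_adj_iff]) ?_ ?_ ?_
  · rw [coe_insert, isIndepSet_iff, Set.pairwise_insert]
    exact ⟨hind, fun a ha _ => ⟨fun h => not_adj_of_mem_attachSet (hA ha) hl h.symm,
      not_adj_of_mem_attachSet (hA ha) hl⟩⟩
  · simp only [mem_insert, forall_eq_or_imp, f.map_adj_iff]
    exact ⟨hil, fun _ ha => adj_of_mem_attachSet (hA ha) hi⟩
  · simp only [mem_insert, forall_eq_or_imp, f.map_adj_iff]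
    exact ⟨fun h => hjl h.symm, fun _ ha => not_adj_of_mem_attachSet (hA ha) hj⟩

theorem IsNClique.insert_insert_of_subset_attachSet [DecidableEq V] {m : ℕ} {B : Finset V}
    (hB : G.IsNClique m B) (hBX : ↑B ⊆ attachSet f X) {i j : W} (hi : i ∈ X) (hj : j ∈ X)
    (hij : H.Adj i j) : G.IsNClique (m + 2) (insert (f i) (insert (f j) B)) := by
  refine (hB.insert fun _ hb => adj_of_mem_attachSet (hBX hb) hj).insert ?_
  simp only [mem_insert, forall_eq_or_imp, f.map_adj_iff]
  exact ⟨hij, fun _ hb => adj_of_mem_attachSet (hBX hb) hi⟩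

theorem ncard_attachSet_lt_ramseyNum [Finite V] {s m : ℕ} (hcf : G.CliqueFree (m + 2))
    (hind : ∀ A : Finset V, ↑A ⊆ attachSet f X → G.IsIndepSet A → A.card < s)
    {i j : W} (hi : i ∈ X) (hj : j ∈ X) (hij : H.Adj i j) :
    (attachSet f X).ncard < ramseyNum s m := by
  classical
  exact ncard_lt_ramseyNum (fun A hA h => (hind A hA h.isIndepSet).ne h.card_eq)
    fun B hB h => hcf _ (h.insert_insert_of_subset_attachSet hB hi hj hij)

theorem ncard_attachSet_le [Finite V] {s c : ℕ} (hH : HFree (starPlusP1 s) G)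
    (hcol : G.Colorable c) {i j l : W} (hi : i ∈ X) (hj : j ∉ X) (hl : l ∉ X)
    (hij : ¬ H.Adj i j) (hil : H.Adj i l) (hjl : ¬ H.Adj j l) :
    (attachSet f X).ncard ≤ (s - 2) * (c - 1) :=
  ncard_le_mul_of_colorable hcol (fun _ hx => adj_of_mem_attachSet hx hi) fun A hA hind => by
    have := card_add_one_lt_of_subset_attachSet hH hi hj hl hij hil hjl hA hind
    omega

end SimpleGraph

theorem stmt9_general {V : Type*} [Fintype V] (G : SimpleGraph V) (k : ℕ)
    (hH : HFree (starPlusP1 4) G)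
    (hchi : G.chromaticNumber ≤ ((k - 1 : ℕ) : ℕ∞))
    (t : ℕ) (ht : 2 ≤ t) (f : ((cycleGraph (2 * t + 1))ᶜ) ↪g G)
    (X : Set (Fin (2 * t + 1))) (hX1 : X.Nonempty) (hX2 : X ≠ Set.univ)
    (SX : Set V) (hSX : SX = {x | x ∉ Set.range f ∧ ∀ i, G.Adj x (f i) ↔ i ∈ X}) :
    (¬ ∃ a ∈ SX, ∃ b ∈ SX, ∃ c ∈ SX, ∃ d ∈ SX,
        a ≠ b ∧ a ≠ c ∧ a ≠ d ∧ b ≠ c ∧ b ≠ d ∧ c ≠ d ∧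
        ¬ G.Adj a b ∧ ¬ G.Adj a c ∧ ¬ G.Adj a d ∧
        ¬ G.Adj b c ∧ ¬ G.Adj b d ∧ ¬ G.Adj c d) ∧
    SX.ncard ≤ ramseyNum 4 (k - 2) := by
  classical
  change SX = attachSet f X at hSX
  subst hSX
  have hcol : G.Colorable (k - 1) := chromaticNumber_le_iff_colorable.1 hchi
  have hk : 4 ≤ k := by
    by_contra
    exact compl_cycleGraph_not_colorable_two (by omega) (odd_two_mul_add_one t)
      ((hcol.of_hom f.toHom).mono (by omega))
  obtain ⟨i, hi, hi₁⟩ := Fin.exists_mem_add_one_notMem hX1 hX2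
  have hind (A : Finset V) (hA : ↑A ⊆ attachSet f X) (hA' : G.IsIndepSet A) : A.card < 4 :=
    card_lt_of_subset_attachSet hH hi hi₁ (compl_cycleGraph_not_adj_add_one i) hA hA'
  refine ⟨?_, ?_⟩
  · rintro ⟨a, ha, b, hb, c, hc, d, hd, hab, hac, had, hbc, hbd, hcd, nab, nac, nad, nbc, nbd, ncd⟩
    have := hind {a, b, c, d} (by simp [Set.insert_subset_iff, *])
      (by simp [isIndepSet_iff, Set.pairwise_insert, G.adj_comm, *])
    simp [card_insert_of_notMem, *] at this
  by_cases hpair : ∃ a ∈ X, ∃ b ∈ X, (cycleGraph (2 * t + 1))ᶜ.Adj a b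
  · obtain ⟨a, ha, b, hb, hab⟩ := hpair
    exact (ncard_attachSet_lt_ramseyNum (hcol.cliqueFree (by omega)) hind ha hb hab).le
  · push Not at hpair
    have hi₂ : i + 2 ∉ X := fun h => hpair i hi _ h (compl_cycleGraph_adj_add_two (by omega) i)
    have hS := ncard_attachSet_le (f := f) hH hcol hi hi₁ hi₂ (compl_cycleGraph_not_adj_add_one i)
      (compl_cycleGraph_adj_add_two (by omega) i)
      (Fin.add_one_add_one i ▸ compl_cycleGraph_not_adj_add_one (i + 1))
    have hR := (hasRamseyProp_ramseyNum 4 (k - 3 + 1)).mul_lt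
    rw [show k - 3 + 1 = k - 2 by omega] at hR
    omega

theorem stmt9 {V : Type*} [Fintype V] (G : SimpleGraph V) (k : ℕ)
    (hP5 : HFree (pathGraph 5) G) (hH : HFree (starPlusP1 4) G)
    (hchi : G.chromaticNumber ≤ ((k - 1 : ℕ) : ℕ∞))
    (t : ℕ) (ht : 2 ≤ t) (f : ((cycleGraph (2 * t + 1))ᶜ) ↪g G)
    (X : Set (Fin (2 * t + 1))) (hX1 : X.Nonempty) (hX2 : X ≠ Set.univ)
    (SX : Set V) (hSX : SX = {x | x ∉ Set.range f ∧ ∀ i, G.Adj x (f i) ↔ i ∈ X}) :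
    (¬ ∃ a ∈ SX, ∃ b ∈ SX, ∃ c ∈ SX, ∃ d ∈ SX,
        a ≠ b ∧ a ≠ c ∧ a ≠ d ∧ b ≠ c ∧ b ≠ d ∧ c ≠ d ∧
        ¬ G.Adj a b ∧ ¬ G.Adj a c ∧ ¬ G.Adj a d ∧
        ¬ G.Adj b c ∧ ¬ G.Adj b d ∧ ¬ G.Adj c d) ∧
    SX.ncard ≤ ramseyNum 4 (k - 2) :=
  stmt9_general G k hH hchi t ht f X hX1 hX2 SX hSX
end

section
/- Let G be a (P_5, complement of (K_3+2P_1))-free graph containing an induced antihole C = complement of C_{2t+1} (t ≥ 2) with vertices indexed so that v_i v_j ∈ E iff |i−j|>1. Then every vertex with no neighbor on C is nonadjacent to every vertex in S_2 (the set of vertices with exactly two neighbors on C). -/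
/-!
Suppose `u ∼ v` and let `f a` be one of the two neighbours of `v` on the antihole. Since the
antihole has at least five vertices, there are `y, z` outside the neighbourhood of `v` such that
`a – y – z` is a path of the antihole while `a, z` are consecutive on the underlying cycle, hence
nonadjacent. As `u` sees nothing on the antihole, `u – v – f a – f y – f z` is an induced `P₅`.
-/

open SimpleGraph

/-- The pattern of an induced `P₅` already forces its five vertices to be distinct. -/
def pathGraphFiveEmbedding {V : Type*} {G : SimpleGraph V} {x₀ x₁ x₂ x₃ x₄ : V}
    (h₀₁ : G.Adj x₀ x₁) (h₁₂ : G.Adj x₁ x₂) (h₂₃ : G.Adj x₂ x₃) (h₃₄ : G.Adj x₃ x₄)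
    (h₀₂ : ¬ G.Adj x₀ x₂) (h₀₃ : ¬ G.Adj x₀ x₃) (h₀₄ : ¬ G.Adj x₀ x₄)
    (h₁₃ : ¬ G.Adj x₁ x₃) (h₁₄ : ¬ G.Adj x₁ x₄) (h₂₄ : ¬ G.Adj x₂ x₄) :
    pathGraph 5 ↪g G where
  toFun := ![x₀, x₁, x₂, x₃, x₄]
  inj' i j hij := by
    fin_cases i <;> fin_cases j <;> simp_all [G.adj_comm]
  map_rel_iff' {i j} := by
    change G.Adj (![x₀, x₁, x₂, x₃, x₄] i) (![x₀, x₁, x₂, x₃, x₄] j) ↔ _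
    fin_cases i <;> fin_cases j <;> simp_all [pathGraph_adj, G.adj_comm]

/- Take `(y, z) = (a + 3, a + 1)`, or `(a + 2, a - 1)` when `b` is `a + 1` or `a + 3`; every
condition then says that one of `1, 2, 3, 4` is nonzero in `Fin n`, which holds as `5 ≤ n`. -/
open Fin.CommRing in
lemma exists_compl_cycleGraph_path_avoiding {n : ℕ} (hn : 5 ≤ n) (a b : Fin n) :
    ∃ y z : Fin n, (cycleGraph n)ᶜ.Adj a y ∧ (cycleGraph n)ᶜ.Adj y z ∧
      (cycleGraph n).Adj a z ∧ y ≠ b ∧ z ≠ b := by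
  obtain ⟨m, rfl⟩ : ∃ m, n = m + 2 := ⟨n - 2, by omega⟩
  have hcast : ∀ k : ℕ, 0 < k → k < m + 2 → (k : Fin (m + 2)) ≠ 0 := fun k h0 hk =>
    Fin.natCast_eq_zero.not.mpr (Nat.not_dvd_of_pos_of_lt h0 hk)
  have h2 : (2 : Fin (m + 2)) ≠ 0 := by exact_mod_cast hcast 2 (by omega) (by omega)
  have h3 : (3 : Fin (m + 2)) ≠ 0 := by exact_mod_cast hcast 3 (by omega) (by omega)
  have h4 : (4 : Fin (m + 2)) ≠ 0 := by exact_mod_cast hcast 4 (by omega) (by omega)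
  simp only [compl_adj, cycleGraph_adj, ne_eq, not_or]
  by_cases hb : b = a + 1 ∨ b = a + 3
  · rcases hb with rfl | rfl <;>
      refine ⟨a + 2, a - 1, ⟨?_, ?_, ?_⟩, ⟨?_, ?_, ?_⟩, .inl (by ring), ?_, ?_⟩ <;>
      intro h <;> have h' := sub_eq_zero.mpr h <;> ring_nf at h' <;>
      simp only [neg_eq_zero, one_ne_zero, h2, h3, h4] at h'
  · refine ⟨a + 3, a + 1, ⟨?_, ?_, ?_⟩, ⟨?_, ?_, ?_⟩, .inr (by ring),
      fun h => hb (.inr h.symm), fun h => hb (.inl h.symm)⟩ <;>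
      intro h <;> have h' := sub_eq_zero.mpr h <;> ring_nf at h' <;>
      simp only [neg_eq_zero, one_ne_zero, h2, h3, h4] at h'

lemma Set.exists_mem_forall_eq_or_eq_of_ncard_eq_two {α : Type*} {s : Set α} (h : s.ncard = 2) :
    ∃ a b, a ∈ s ∧ ∀ c ∈ s, c = a ∨ c = b := by
  obtain ⟨a, b, -, rfl⟩ := Set.ncard_eq_two.mp h
  exact ⟨a, b, Set.mem_insert a {b}, fun c hc => hc⟩

theorem stmt12_general {V : Type*} (G : SimpleGraph V)
    (hP5 : HFree (pathGraph 5) G)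
    (t : ℕ) (ht : 2 ≤ t) (f : ((cycleGraph (2 * t + 1))ᶜ) ↪g G)
    (u : V) (hu0 : ∀ i, ¬ G.Adj u (f i))
    (v : V)
    (hv2 : {i : Fin (2 * t + 1) | G.Adj v (f i)}.ncard = 2) :
    ¬ G.Adj u v := by
  intro huv
  obtain ⟨a, b, hva, hvab⟩ := Set.exists_mem_forall_eq_or_eq_of_ncard_eq_two hv2
  have hv_off : ∀ c, c ≠ a → c ≠ b → ¬ G.Adj v (f c) := fun c hca hcb hvc =>
    (hvab c hvc).elim hca hcb
  obtain ⟨y, z, hay, hyz, haz, hyb, hzb⟩ := exists_compl_cycleGraph_path_avoiding (by omega) a b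
  exact hP5.false <| pathGraphFiveEmbedding huv hva (f.map_adj_iff.mpr hay)
    (f.map_adj_iff.mpr hyz) (hu0 a) (hu0 y) (hu0 z) (hv_off y hay.ne.symm hyb)
    (hv_off z haz.ne.symm hzb) (fun h => (f.map_adj_iff.mp h).2 haz)

theorem stmt12 {V : Type*} (G : SimpleGraph V)
    (hP5 : HFree (pathGraph 5) G) (hH : HFree coK3Plus2P1 G)
    (t : ℕ) (ht : 2 ≤ t) (f : ((cycleGraph (2 * t + 1))ᶜ) ↪g G)
    (u : V) (hu : u ∉ Set.range f) (hu0 : ∀ i, ¬ G.Adj u (f i))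
    (v : V) (hv : v ∉ Set.range f)
    (hv2 : {i : Fin (2 * t + 1) | G.Adj v (f i)}.ncard = 2) :
    ¬ G.Adj u v :=
  stmt12_general G hP5 t ht f u hu0 v hv2
end

section
/- Let G be a graph containing an induced antihole C = complement of C_{2t+1} (t ≥ 2) with vertices v_1,...,v_{2t+1} (v_i v_j ∈ E iff |i−j|>1, indices mod 2t+1), such that G is (complement of (K_3+2P_1))-free. Let u, v ∈ S(v_i, v_{i+1}) with uv ∉ E(G). Then every vertex whose neighborhood on C has size 2t or 2t+1 is nonadjacent to at least one of u and v. -/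
open SimpleGraph

/-! If `w` were adjacent to both `u` and `v`, it would miss at most one vertex of the antihole
`C`. So `w` sees some `v_k` with `k ∈ {i, i+1}`, and, since `v_k` has `2t - 2 ≥ 2` neighbours in
`C`, also some neighbour `v_j` of `v_k` in `C`. Consecutive vertices are nonadjacent in `C`, so
`j ∉ {i, i+1}` and `{u, v, v_j}` is independent, while `w` and `v_k` are adjacent to each other
and to all three: an induced complement of `K_3 + 2P_1`. -/

theorem cycleGraph_adj_add_one {n : ℕ} [NeZero n] (hn : 1 < n) (v : Fin n) :
    (cycleGraph n).Adj v (v + 1) :=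
  cycleGraph_adj'.2 <| .inr <| by rw [add_sub_cancel_left, Fin.val_one', Nat.mod_eq_of_lt hn]

theorem notMem_pair_of_compl_cycleGraph_adj {n : ℕ} [NeZero n] (hn : 1 < n) {i k j : Fin n}
    (hk : k ∈ ({i, i + 1} : Set (Fin n))) (hkj : (cycleGraph n)ᶜ.Adj k j) :
    j ∉ ({i, i + 1} : Set (Fin n)) := by
  have hi := cycleGraph_adj_add_one hn i
  rintro (rfl | rfl) <;> obtain rfl | rfl := hk
  exacts [hkj.ne rfl, hkj.2 hi.symm, hkj.2 hi, hkj.ne rfl]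

theorem ncard_neighborSet_compl_cycleGraph {n : ℕ} (hn : 3 ≤ n) (v : Fin n) :
    ((cycleGraph n)ᶜ.neighborSet v).ncard = n - 3 := by
  obtain ⟨m, rfl⟩ := Nat.exists_eq_add_of_le' hn
  rw [← Set.fintypeCard_eq_ncard, card_neighborSet_eq_degree, degree_compl,
    cycleGraph_degree_three_le, Fintype.card_fin]
  omega

theorem ncard_compl_le_one_of_card_le {α : Type*} [Fintype α] {s : Set α}
    (hs : Fintype.card α ≤ s.ncard + 1) : sᶜ.ncard ≤ 1 := by
  have := Set.ncard_add_ncard_compl s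
  rw [Nat.card_eq_fintype_card] at this
  omega

theorem not_hFree_coK3Plus2P1 {V : Type*} {G : SimpleGraph V} {a b c x y : V}
    (hab : a ≠ b) (hac : a ≠ c) (hbc : b ≠ c)
    (hab' : ¬ G.Adj a b) (hac' : ¬ G.Adj a c) (hbc' : ¬ G.Adj b c)
    (hxy : G.Adj x y) (hxa : G.Adj x a) (hxb : G.Adj x b) (hxc : G.Adj x c)
    (hya : G.Adj y a) (hyb : G.Adj y b) (hyc : G.Adj y c) :
    ¬ HFree coK3Plus2P1 G := by
  have hinj : Function.Injective ![a, b, c, x, y] := by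
    intro p q hpq
    fin_cases p <;> fin_cases q <;> simp_all [eq_comm, hxy.ne]
  refine fun h => h.false ⟨⟨_, hinj⟩, fun {p q} => ?_⟩
  show G.Adj (![a, b, c, x, y] p) (![a, b, c, x, y] q) ↔ coK3Plus2P1.Adj p q
  fin_cases p <;> fin_cases q <;> simp_all [coK3Plus2P1, G.adj_comm]

theorem stmt13_general {V : Type*} (G : SimpleGraph V) (hH : HFree coK3Plus2P1 G)
    (t : ℕ) (ht : 2 ≤ t) (f : ((cycleGraph (2 * t + 1))ᶜ) ↪g G)
    (i : Fin (2 * t + 1)) (u v : V) (hne : u ≠ v)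
    (hu : u ∉ Set.range f) (hu2 : ∀ j, G.Adj u (f j) ↔ (j = i ∨ j = i + 1))
    (hv : v ∉ Set.range f) (hv2 : ∀ j, G.Adj v (f j) ↔ (j = i ∨ j = i + 1))
    (huv : ¬ G.Adj u v)
    (w : V)
    (hwcard : 2 * t ≤ {j : Fin (2 * t + 1) | G.Adj w (f j)}.ncard) :
    ¬ G.Adj w u ∨ ¬ G.Adj w v := by
  rw [← not_and_or]
  rintro ⟨hwu, hwv⟩
  set M := {j | ¬ G.Adj w (f j)}
  have hM : M.ncard ≤ 1 :=
    ncard_compl_le_one_of_card_le (s := {j | G.Adj w (f j)}) (by simpa using hwcard)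
  obtain ⟨k, hk, hwk⟩ := Set.exists_mem_notMem_of_ncard_lt_ncard (s := M) (t := {i, i + 1}) <| by
    rw [Set.ncard_pair (cycleGraph_adj_add_one (by omega) i).ne]
    omega
  obtain ⟨j, hkj, hwj⟩ := Set.exists_mem_notMem_of_ncard_lt_ncard (s := M)
      (t := (cycleGraph (2 * t + 1))ᶜ.neighborSet k) <| by
    rw [ncard_neighborSet_compl_cycleGraph (by omega)]
    omega
  have hj := notMem_pair_of_compl_cycleGraph_adj (by omega) hk hkj
  exact not_hFree_coK3Plus2P1 hne (fun h => hu ⟨j, h.symm⟩) (fun h => hv ⟨j, h.symm⟩)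
    huv (fun h => hj ((hu2 j).1 h)) (fun h => hj ((hv2 j).1 h))
    (not_not.1 hwk) hwu hwv (not_not.1 hwj) ((hu2 k).2 hk).symm ((hv2 k).2 hk).symm
    (f.map_adj_iff.2 hkj) hH

theorem stmt13 {V : Type*} (G : SimpleGraph V) (hH : HFree coK3Plus2P1 G)
    (t : ℕ) (ht : 2 ≤ t) (f : ((cycleGraph (2 * t + 1))ᶜ) ↪g G)
    (i : Fin (2 * t + 1)) (u v : V) (hne : u ≠ v)
    (hu : u ∉ Set.range f) (hu2 : ∀ j, G.Adj u (f j) ↔ (j = i ∨ j = i + 1))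
    (hv : v ∉ Set.range f) (hv2 : ∀ j, G.Adj v (f j) ↔ (j = i ∨ j = i + 1))
    (huv : ¬ G.Adj u v)
    (w : V) (hw : w ∉ Set.range f)
    (hwcard : 2 * t ≤ {j : Fin (2 * t + 1) | G.Adj w (f j)}.ncard) :
    ¬ G.Adj w u ∨ ¬ G.Adj w v :=
  stmt13_general G hH t ht f i u v hne hu hu2 hv hv2 huv w hwcard
end
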